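/- arXiv:2302.09842 — 2 statements merged into one kernel-verified Lean document; each statement's English description precedes it below -/
import Mathlib

section
/- Let q ≥ 2 and 1 ≤ t < n. Every t-deletion-t-substitution correcting code C ⊆ Σ_q^n (i.e., a code such that B_t^{DS}(x) ∩ B_t^{DS}(x′) = ∅ for all distinct x, x′ ∈ C) is a t-absorption correcting code, i.e., B_t^{ab}(x) ∩ B_t^{ab}(x′) = ∅ for all distinct x, x′ ∈ C. -/
/-- `a ⊕ b = min(a+b, q-1)` over the alphabet `Σ_q = {0,…,q-1}`. -/
def vplus (q a b : ℕ) : ℕ := min (a + b) (q - 1)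

/-- `MergeBlocks op x y s` holds if `y` is obtained from `x` by replacing finitely many
disjoint blocks of consecutive symbols, each of length at least `2`, by the `op`-fold of the
block, where `s` is the total number of symbols that disappeared. -/
inductive MergeBlocks (op : ℕ → ℕ → ℕ) : List ℕ → List ℕ → ℕ → Prop
  | nil : MergeBlocks op [] [] 0
  | keep (a : ℕ) {x y : List ℕ} {s : ℕ} : MergeBlocks op x y s →
      MergeBlocks op (a :: x) (a :: y) s
  | block (b : List ℕ) {x y : List ℕ} {s : ℕ} : 2 ≤ b.length →
      MergeBlocks op x y s →
      MergeBlocks op (b ++ x) (b.foldl op 0 :: y) (s + (b.length - 1))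

/-- The `t`-absorption ball `B_t^{ab}(x)`. -/
def absorbBall (q t : ℕ) (x : List ℕ) : Set (List ℕ) :=
  {y | ∃ t' ≤ t, MergeBlocks (vplus q) (x.take (x.length - t')) y (t - t')}

/-- The `t`-deletion-`t`-substitution ball `B_t^{DS}(x)`. -/
def dsBall (q n t : ℕ) (x : List ℕ) : Set (List ℕ) :=
  {z | z.length = n - t ∧ (∀ a ∈ z, a < q) ∧
    ∃ w : List ℕ, w.Sublist x ∧ w.length = n - t ∧
      ((Finset.range (n - t)).filter (fun i => w.getD i 0 ≠ z.getD i 0)).card ≤ t}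

lemma mb_length {op : ℕ → ℕ → ℕ} {x y : List ℕ} {s : ℕ} (h : MergeBlocks op x y s) :
    x.length = y.length + s := by
  induction h with
  | nil => rfl
  | keep a h ih => simp [ih]; omega
  | block b hb h ih => simp [List.length_append, ih]; omega

lemma foldl_vplus_le (q : ℕ) : ∀ (l : List ℕ) (a : ℕ), l ≠ [] → l.foldl (vplus q) a ≤ q - 1 := by
  intro l
  induction l with
  | nil => intro a h; exact absurd rfl h
  | cons c l ih =>
    intro a _
    cases l with
    | nil => simp [vplus]
    | cons d l => exact ih _ (by simp)

lemma mb_lt {q : ℕ} (hq : 1 ≤ q) {x y : List ℕ} {s : ℕ} (h : MergeBlocks (vplus q) x y s)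
    (hx : ∀ a ∈ x, a < q) : ∀ a ∈ y, a < q := by
  induction h with
  | nil => exact hx
  | keep a h ih =>
    intro b hb
    rcases List.mem_cons.1 hb with rfl | hb
    · exact hx b List.mem_cons_self
    · exact ih (fun a ha => hx a (List.mem_cons_of_mem _ ha)) b hb
  | block b hb h ih =>
    intro c hc
    rcases List.mem_cons.1 hc with rfl | hc
    · have : b ≠ [] := by intro hb'; simp [hb'] at hb
      have := foldl_vplus_le q b 0 this
      omega
    · exact ih (fun a ha => hx a (by simp [ha])) c hc

lemma mism_cons (a b : ℕ) (w y : List ℕ) :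
    ((Finset.range (y.length + 1)).filter
        (fun i => (a :: w).getD i 0 ≠ (b :: y).getD i 0)).card =
      (if a = b then 0 else 1) +
        ((Finset.range y.length).filter (fun i => w.getD i 0 ≠ y.getD i 0)).card := by
  rw [Finset.card_filter, Finset.card_filter, Finset.sum_range_succ']
  simp only [List.getD_cons_succ, List.getD_cons_zero, ite_not]
  omega

lemma mb_sub {op : ℕ → ℕ → ℕ} {x y : List ℕ} {s : ℕ} (h : MergeBlocks op x y s) :
    ∃ w : List ℕ, w.Sublist x ∧ w.length = y.length ∧
      ((Finset.range y.length).filter (fun i => w.getD i 0 ≠ y.getD i 0)).card ≤ s := by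
  induction h with
  | nil => exact ⟨[], List.Sublist.refl _, rfl, by simp⟩
  | keep a h ih =>
    obtain ⟨w, hw, hl, hc⟩ := ih
    refine ⟨a :: w, hw.cons₂ a, by simp [hl], ?_⟩
    rw [List.length_cons, mism_cons]
    simpa using hc
  | block b hb h ih =>
    obtain ⟨w, hw, hl, hc⟩ := ih
    cases b with
    | nil => simp at hb
    | cons c btail =>
      refine ⟨c :: w, ?_, by simp [hl], ?_⟩
      · exact (hw.trans (List.sublist_append_right btail _)).cons₂ c
      · rw [List.length_cons, mism_cons]
        have : (if c = (c :: btail).foldl op 0 then 0 else 1) ≤ 1 := by split <;> omega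
        have hb' : 1 ≤ btail.length := by simpa using hb
        simp only [List.length_cons]
        omega

lemma absorb_sub_ds (q n t : ℕ) (hq : 2 ≤ q) (htn : t ≤ n) (x : List ℕ)
    (hxl : x.length = n) (hxq : ∀ a ∈ x, a < q) :
    absorbBall q t x ⊆ dsBall q n t x := by
  intro y hy
  obtain ⟨t', ht', hmb⟩ := hy
  have htake : (x.take (x.length - t')).length = n - t' := by
    simp [hxl]
  have hylen : y.length = n - t := by
    have := mb_length hmb
    rw [htake] at this
    omega
  refine ⟨hylen, ?_, ?_⟩
  · exact mb_lt (by omega) hmb (fun a ha => hxq a ((List.take_sublist _ _).subset ha))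
  · obtain ⟨w, hw, hwl, hwc⟩ := mb_sub hmb
    refine ⟨w, hw.trans (List.take_sublist _ _), by omega, ?_⟩
    rw [← hylen]
    exact hwc.trans (by omega)

/-- every `t`-deletion-`t`-substitution correcting code `C ⊆ Σ_q^n`
is a `t`-absorption correcting code. -/
theorem stmt3 (q n t : ℕ) (hq : 2 ≤ q) (ht : 1 ≤ t) (htn : t < n)
    (C : Set (List ℕ)) (hC : ∀ x ∈ C, x.length = n ∧ ∀ a ∈ x, a < q)
    (hDS : ∀ x ∈ C, ∀ x' ∈ C, x ≠ x' → dsBall q n t x ∩ dsBall q n t x' = ∅) :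
    ∀ x ∈ C, ∀ x' ∈ C, x ≠ x' → absorbBall q t x ∩ absorbBall q t x' = ∅ := by
  intro x hx x' hx' hne
  rw [Set.eq_empty_iff_forall_notMem]
  rintro y ⟨hy, hy'⟩
  have h1 := absorb_sub_ds q n t hq htn.le x (hC x hx).1 (hC x hx).2 hy
  have h2 := absorb_sub_ds q n t hq htn.le x' (hC x' hx').1 (hC x' hx').2 hy'
  have := hDS x hx x' hx' hne
  rw [Set.eq_empty_iff_forall_notMem] at this
  exact this y ⟨h1, h2⟩
end

section
/- Let q ≥ 3 and let a, b be integers with 0 < a, b < q−1 and a + b ≤ q−1; set c = a + b. Let y ∈ Σ_q^{n−1} and let 1 ≤ i < j ≤ n−1 be positions with y_i = y_j = c. Let x′ ∈ Σ_q^n be obtained from y by replacing the symbol y_i with the two symbols αβ, where (α,β) is (a,b) or (b,a), and let x″ ∈ Σ_q^n be obtained from y by replacing the symbol y_j with the two symbols γδ, where (γ,δ) is (a,b) or (b,a). Then 0 < Syn(x′) − Syn(x″) < qn; in particular Syn(x′) ≢ Syn(x″) (mod qn). -/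
/-!
Replacing a symbol `y_i = α + β` by the pair `α β` raises the syndrome by `β + Σ_{k > i} y_k`,
because every later symbol moves one position to the right. Hence
`Syn(x′) - Syn(x″) = β - δ + (y_{i+1} + ⋯ + y_j)`. This is positive since the block contains
`y_j = a + b > δ`, and it is below `qn` since `β ≤ y_i < q` and the block consists of at most
`n - 2` symbols, each less than `q`.
-/

/-- The VT syndrome `Syn(z) = Σ_{i=1}^{|z|} i·z_i` (positions are 1-indexed,
so index `i` of the list gets weight `i+1`). -/
def syn (z : List ℕ) : ℕ := ∑ i ∈ Finset.range z.length, (i + 1) * z.getD i 0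

lemma List.sum_range_getD_eq_sum (l : List ℕ) :
    ∑ k ∈ Finset.range l.length, l.getD k 0 = l.sum := by
  induction l with
  | nil => simp
  | cons x l ih =>
    simp only [List.length_cons, Finset.sum_range_succ', List.getD_cons_succ,
      List.getD_cons_zero, ih, List.sum_cons, add_comm]

@[simp]
lemma syn_nil : syn [] = 0 := rfl

lemma syn_cons (x : ℕ) (l : List ℕ) : syn (x :: l) = x + l.sum + syn l := by
  simp only [syn, List.length_cons, Finset.sum_range_succ', List.getD_cons_succ,
    List.getD_cons_zero, add_mul, one_mul, Finset.sum_add_distrib, l.sum_range_getD_eq_sum]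
  ring

lemma syn_append (u v : List ℕ) : syn (u ++ v) = syn u + u.length * v.sum + syn v := by
  induction u with
  | nil => simp
  | cons x u ih =>
    rw [List.cons_append, syn_cons, ih, syn_cons, List.sum_append, List.length_cons]
    ring

lemma syn_append_cons_cons (u v : List ℕ) (α β : ℕ) :
    syn (u ++ α :: β :: v) = syn (u ++ (α + β) :: v) + β + v.sum := by
  simp only [syn_append, syn_cons, List.sum_cons]
  ring

lemma syn_take_append_cons_cons_drop (y : List ℕ) {i : ℕ} (hi : i < y.length) {α β : ℕ}
    (hy : y[i] = α + β) :
    syn (y.take i ++ α :: β :: y.drop (i + 1)) = syn y + β + (y.drop (i + 1)).sum := by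
  rw [syn_append_cons_cons, ← hy, List.getElem_cons_drop, List.take_append_drop]

lemma List.sum_drop_eq_sum_drop_take_add_sum_drop (y : List ℕ) {i j : ℕ} (hij : i ≤ j)
    (hj : j ≤ y.length) : (y.drop i).sum = ((y.take j).drop i).sum + (y.drop j).sum := by
  conv_lhs => rw [← y.take_append_drop j]
  rw [List.drop_append_of_le_length (by simp; omega), List.sum_append]

lemma List.getElem_le_sum_drop_take (y : List ℕ) {i j : ℕ} (hij : i ≤ j) (hj : j < y.length) :
    y[j] ≤ ((y.take (j + 1)).drop i).sum := by
  apply List.le_sum_of_mem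
  have hk : j - i < ((y.take (j + 1)).drop i).length := by simp; omega
  convert List.getElem_mem hk using 1
  simp only [List.getElem_drop, List.getElem_take]
  congr 1; omega

lemma List.sum_drop_take_le (y : List ℕ) {c : ℕ} (hy : ∀ e ∈ y, e ≤ c) (i j : ℕ) :
    ((y.take j).drop i).sum ≤ (j - i) * c := by
  calc ((y.take j).drop i).sum ≤ ((y.take j).drop i).length • c :=
        List.sum_le_card_nsmul _ _ fun e he ↦
          hy e (List.mem_of_mem_take (List.mem_of_mem_drop he))
    _ ≤ (j - i) * c := by
        rw [smul_eq_mul]; gcongr; simp; omega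

lemma syn_sub_syn (y : List ℕ) {i j : ℕ} (hij : i < j) (hj : j < y.length) {α β γ δ : ℕ}
    (hyi : y[i] = α + β) (hyj : y[j] = γ + δ) :
    (syn (y.take i ++ α :: β :: y.drop (i + 1)) : ℤ) - syn (y.take j ++ γ :: δ :: y.drop (j + 1))
      = β + ((y.take (j + 1)).drop (i + 1)).sum - δ := by
  rw [syn_take_append_cons_cons_drop y (hij.trans hj) hyi,
    syn_take_append_cons_cons_drop y hj hyj,
    y.sum_drop_eq_sum_drop_take_add_sum_drop (i := i + 1) (j := j + 1) (by omega) hj]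
  push_cast
  ring

lemma Nat.not_modEq_of_sub_pos_of_sub_lt {a b m : ℕ} (h0 : 0 < (a : ℤ) - b)
    (hm : (a : ℤ) - b < m) : ¬ a ≡ b [MOD m] := by
  intro h
  have := h.symm.eq_of_abs_lt (by rwa [abs_of_pos h0])
  omega

theorem stmt4_general (q n : ℕ) (a b : ℕ)
    (ha0 : 0 < a) (hb0 : 0 < b)
    (y : List ℕ) (hylen : y.length = n - 1) (hyq : ∀ e ∈ y, e < q)
    (i j : ℕ) (hij : i < j) (hj : j < n - 1)
    (hyi : y.getD i 0 = a + b) (hyj : y.getD j 0 = a + b)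
    (α β γ δ : ℕ)
    (hαβ : (α = a ∧ β = b) ∨ (α = b ∧ β = a))
    (hγδ : (γ = a ∧ δ = b) ∨ (γ = b ∧ δ = a))
    (x' x'' : List ℕ)
    (hx' : x' = y.take i ++ α :: β :: y.drop (i + 1))
    (hx'' : x'' = y.take j ++ γ :: δ :: y.drop (j + 1)) :
    0 < (syn x' : ℤ) - (syn x'' : ℤ) ∧ (syn x' : ℤ) - (syn x'' : ℤ) < q * n ∧
      ¬ (syn x' ≡ syn x'' [MOD q * n]) := by
  have hjy : j < y.length := by omega
  rw [List.getD_eq_getElem _ _ (hij.trans hjy)] at hyi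
  rw [List.getD_eq_getElem _ _ hjy] at hyj
  have hαβ_sum : α + β = a + b := by omega
  have hγδ_sum : γ + δ = a + b := by omega
  have hγ : 0 < γ := by omega
  have hβ : β < q := by
    have := hyq _ (List.getElem_mem (hij.trans hjy))
    omega
  have hdiff := syn_sub_syn y hij hjy (hyi.trans hαβ_sum.symm) (hyj.trans hγδ_sum.symm)
  rw [← hx', ← hx''] at hdiff
  have hlow := y.getElem_le_sum_drop_take (by omega : i + 1 ≤ j) hjy
  have hup := y.sum_drop_take_le (fun e he ↦ (hyq e he).le) (i + 1) (j + 1)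
  have hpos : 0 < (syn x' : ℤ) - syn x'' := by rw [hdiff]; omega
  have hseg_lt : β + ((y.take (j + 1)).drop (i + 1)).sum < q * n :=
    calc β + ((y.take (j + 1)).drop (i + 1)).sum < q + (j + 1 - (i + 1)) * q := by omega
      _ = (j + 1 - (i + 1) + 1) * q := by ring
      _ ≤ n * q := Nat.mul_le_mul_right _ (by omega)
      _ = q * n := mul_comm _ _
  have hlt : (syn x' : ℤ) - syn x'' < q * n := by rw [hdiff]; omega
  exact ⟨hpos, hlt, Nat.not_modEq_of_sub_pos_of_sub_lt hpos (by exact_mod_cast hlt)⟩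

/-- Lemma 1: let `q ≥ 3`, `0 < a, b < q-1` with `a + b ≤ q-1`, `c = a+b`.
Let `y ∈ Σ_q^{n-1}` have `y` equal to `c` at two (0-indexed) positions `i < j ≤ n-2`.
If `x'` is obtained from `y` by replacing the `c` at position `i` with `αβ ∈ {ab, ba}`,
and `x''` is obtained by replacing the `c` at position `j` with `γδ ∈ {ab, ba}`,
then `0 < Syn(x') - Syn(x'') < qn`; in particular `Syn(x') ≢ Syn(x'') (mod qn)`. -/
theorem stmt4 (q n : ℕ) (hq : 3 ≤ q) (a b : ℕ)
    (ha0 : 0 < a) (ha : a < q - 1) (hb0 : 0 < b) (hb : b < q - 1)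
    (hab : a + b ≤ q - 1)
    (y : List ℕ) (hylen : y.length = n - 1) (hyq : ∀ e ∈ y, e < q)
    (i j : ℕ) (hij : i < j) (hj : j < n - 1)
    (hyi : y.getD i 0 = a + b) (hyj : y.getD j 0 = a + b)
    (α β γ δ : ℕ)
    (hαβ : (α = a ∧ β = b) ∨ (α = b ∧ β = a))
    (hγδ : (γ = a ∧ δ = b) ∨ (γ = b ∧ δ = a))
    (x' x'' : List ℕ)
    (hx' : x' = y.take i ++ α :: β :: y.drop (i + 1))
    (hx'' : x'' = y.take j ++ γ :: δ :: y.drop (j + 1)) :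
    0 < (syn x' : ℤ) - (syn x'' : ℤ) ∧ (syn x' : ℤ) - (syn x'' : ℤ) < q * n ∧
      ¬ (syn x' ≡ syn x'' [MOD q * n]) :=
  stmt4_general q n a b ha0 hb0 y hylen hyq i j hij hj hyi hyj α β γ δ hαβ hγδ x' x'' hx' hx''
end
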